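/- arXiv:2104.10061 — 4 statements merged into one kernel-verified Lean document; each statement's English description precedes it below -/
import Mathlib

section
/- Let z_Ψ, z_Φ, a, a' be vectors in C^m. Suppose |⟨z_Ψ − z_Φ, a⟩| ≤ ε and |⟨z_Ψ − z_Φ, a'⟩| ≤ ε, and suppose ‖z_Ψ − a'‖² ≤ ‖z_Ψ − a‖² (optimality of a' for the distorted sketch). Then ‖z_Φ − a'‖₂ ≤ ‖z_Φ − a‖₂ + 2√ε. -/
/-!
Write `u = zΨ - zΦ`. Moving the centre of the two squared distances from `zΨ` to `zΦ` changes
their difference only by `2 Re⟪u, a' - a⟫`, which is at most `2ε + 2ε` since `u` is almost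
orthogonal to both `a` and `a'`. Hence `‖zΦ - a'‖² ≤ ‖zΦ - a‖² + 4ε ≤ (‖zΦ - a‖ + 2√ε)²`.
-/

open scoped InnerProductSpace

section InnerProductSpace

variable {𝕜 E : Type*} [RCLike 𝕜] [SeminormedAddCommGroup E] [InnerProductSpace 𝕜 E]

theorem norm_sub_sq_sub_norm_sub_sq (y a b : E) :
    ‖y - b‖ ^ 2 - ‖y - a‖ ^ 2 = ‖b‖ ^ 2 - ‖a‖ ^ 2 - 2 * RCLike.re ⟪y, b - a⟫_𝕜 := by
  rw [norm_sub_sq (𝕜 := 𝕜), norm_sub_sq (𝕜 := 𝕜), inner_sub_right, map_sub]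
  ring

theorem norm_sub_sq_sub_norm_sub_sq_sub (x y a b : E) :
    (‖y - b‖ ^ 2 - ‖y - a‖ ^ 2) - (‖x - b‖ ^ 2 - ‖x - a‖ ^ 2) =
      2 * RCLike.re ⟪x - y, b - a⟫_𝕜 := by
  rw [norm_sub_sq_sub_norm_sub_sq (𝕜 := 𝕜) y, norm_sub_sq_sub_norm_sub_sq (𝕜 := 𝕜) x,
    inner_sub_left, map_sub]
  ring

theorem re_inner_sub_le_of_norm_inner_le {u a b : E} {ε : ℝ}
    (ha : ‖⟪u, a⟫_𝕜‖ ≤ ε) (hb : ‖⟪u, b⟫_𝕜‖ ≤ ε) :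
    RCLike.re ⟪u, b - a⟫_𝕜 ≤ 2 * ε :=
  calc RCLike.re ⟪u, b - a⟫_𝕜 ≤ ‖⟪u, b⟫_𝕜 - ⟪u, a⟫_𝕜‖ := by
        rw [inner_sub_right]; exact RCLike.re_le_norm _
    _ ≤ ‖⟪u, b⟫_𝕜‖ + ‖⟪u, a⟫_𝕜‖ := norm_sub_le _ _
    _ ≤ 2 * ε := by linarith

end InnerProductSpace

theorem le_add_of_sq_le_sq_add_sq {x y c : ℝ} (hy : 0 ≤ y) (hc : 0 ≤ c)
    (h : x ^ 2 ≤ y ^ 2 + c ^ 2) : x ≤ y + c :=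
  le_of_sq_le_sq (h.trans (by nlinarith [mul_nonneg hy hc])) (add_nonneg hy hc)

theorem asym_sketch_suboptimality_general {m : ℕ} (zΨ zΦ a a' : EuclideanSpace ℂ (Fin m))
    (ε : ℝ)
    (h1 : ‖⟪zΨ - zΦ, a⟫_ℂ‖ ≤ ε) (h2 : ‖⟪zΨ - zΦ, a'⟫_ℂ‖ ≤ ε)
    (hopt : ‖zΨ - a'‖ ^ 2 ≤ ‖zΨ - a‖ ^ 2) :
    ‖zΦ - a'‖ ≤ ‖zΦ - a‖ + 2 * Real.sqrt ε := by
  have hε : 0 ≤ ε := (norm_nonneg _).trans h1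
  have hshift := norm_sub_sq_sub_norm_sub_sq_sub (𝕜 := ℂ) zΨ zΦ a a'
  have hre := re_inner_sub_le_of_norm_inner_le h1 h2
  have key : ‖zΦ - a'‖ ^ 2 ≤ ‖zΦ - a‖ ^ 2 + (2 * Real.sqrt ε) ^ 2 := by
    rw [mul_pow, Real.sq_sqrt hε]
    linarith
  exact le_add_of_sq_le_sq_add_sq (norm_nonneg _) (by positivity) key

theorem asym_sketch_suboptimality {m : ℕ} (zΨ zΦ a a' : EuclideanSpace ℂ (Fin m))
    (ε : ℝ) (hε : 0 < ε)
    (h1 : ‖⟪zΨ - zΦ, a⟫_ℂ‖ ≤ ε) (h2 : ‖⟪zΨ - zΦ, a'⟫_ℂ‖ ≤ ε)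
    (hopt : ‖zΨ - a'‖ ^ 2 ≤ ‖zΨ - a‖ ^ 2) :
    ‖zΦ - a'‖ ≤ ‖zΦ - a‖ + 2 * Real.sqrt ε :=
  asym_sketch_suboptimality_general zΨ zΦ a a' ε h1 h2 hopt
end

section
/- The one-bit universal quantization function q(t) = sign(cos t) + i·sign(sin t) is mean Lipschitz smooth with constant 8/π: for every δ ∈ (0, π], (1/2π)∫₀^{2π} sup_{|r|≤δ} |q(t+r) − q(t)| dt ≤ (8/π)·δ. -/
/-!
A component of `q` can only jump between `t` and `t + r`, `|r| ≤ δ`, if `t` is within `δ` of a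
zero of `cos` (resp. `sin`), and then by at most `2`. So for `t ∈ [0, 2π]` the oscillation of `q`
is at most `2 · 1_C(t) + 2 · 1_S(t)`, where `C` and `S` are the `δ`-neighbourhoods of the zeros of
`cos` and `sin` in `[0, 2π]`, each of length at most `4δ`. Integrating gives `16δ = 2π · 8δ / π`.
-/

/-- A 2π-periodic function `f` is mean Lipschitz smooth with constant `L`. -/
noncomputable def MeanLipschitzWith (L : ℝ) (f : ℝ → ℂ) : Prop :=
  ∀ δ : ℝ, 0 < δ → δ ≤ Real.pi →
    (1 / (2 * Real.pi)) * ∫ t in (0:ℝ)..(2 * Real.pi),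
        sSup ((fun r => ‖f (t + r) - f t‖) '' Set.Icc (-δ) δ) ≤ L * δ

/-- The sign function: 1 if x ≥ 0, -1 if x < 0. -/
noncomputable def sgn (x : ℝ) : ℝ := if 0 ≤ x then 1 else -1

/-- One-bit universal quantization: q(t) = sign(cos t) + i·sign(sin t). -/
noncomputable def oneBitQuant (t : ℝ) : ℂ :=
  (sgn (Real.cos t) : ℂ) + Complex.I * (sgn (Real.sin t) : ℂ)

open Real Set MeasureTheory

lemma sgn_of_nonneg {x : ℝ} (h : 0 ≤ x) : sgn x = 1 := if_pos h

lemma sgn_of_neg {x : ℝ} (h : x < 0) : sgn x = -1 := if_neg (not_le.2 h)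

lemma abs_sgn_sub_sgn_le_indicator {a b t : ℝ} {s : Set ℝ} (h : t ∉ s → sgn a = sgn b) :
    |sgn a - sgn b| ≤ s.indicator (fun _ ↦ 2) t := by
  by_cases ht : t ∈ s
  · rw [indicator_of_mem ht]
    unfold sgn
    split_ifs <;> norm_num
  · rw [h ht, sub_self, abs_zero, indicator_of_notMem ht]

def cosZeroNbhd (δ : ℝ) : Set ℝ :=
  Icc (π / 2 - δ) (π / 2 + δ) ∪ Icc (3 * π / 2 - δ) (3 * π / 2 + δ)

/-- Cut off outside `[0, 2π]`, the only part the integral sees, so that its length is `4δ`. -/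
def sinZeroNbhd (δ : ℝ) : Set ℝ :=
  Icc 0 δ ∪ Icc (π - δ) (π + δ) ∪ Icc (2 * π - δ) (2 * π)

lemma isCompact_cosZeroNbhd (δ : ℝ) : IsCompact (cosZeroNbhd δ) :=
  isCompact_Icc.union isCompact_Icc

lemma isCompact_sinZeroNbhd (δ : ℝ) : IsCompact (sinZeroNbhd δ) :=
  (isCompact_Icc.union isCompact_Icc).union isCompact_Icc

lemma sgn_cos_add_eq {δ t r : ℝ} (ht : t ∈ Icc 0 (2 * π)) (hr : r ∈ Icc (-δ) δ)
    (hδt : t ∉ cosZeroNbhd δ) : sgn (cos (t + r)) = sgn (cos t) := by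
  obtain ⟨ht0, ht2⟩ := ht
  obtain ⟨hr1, hr2⟩ := hr
  simp only [cosZeroNbhd, mem_union, mem_Icc, not_or, not_and_or, not_le] at hδt
  obtain ⟨h1 | h1, h2 | h2⟩ := hδt
  · rw [sgn_of_nonneg (cos_nonneg_of_mem_Icc ⟨by linarith, by linarith⟩),
      sgn_of_nonneg (cos_nonneg_of_mem_Icc ⟨by linarith, by linarith⟩)]
  · linarith
  · rw [sgn_of_neg (cos_neg_of_pi_div_two_lt_of_lt (by linarith) (by linarith)),
      sgn_of_neg (cos_neg_of_pi_div_two_lt_of_lt (by linarith) (by linarith))]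
  · rw [← cos_sub_two_pi (t + r), ← cos_sub_two_pi t,
      sgn_of_nonneg (cos_nonneg_of_mem_Icc ⟨by linarith, by linarith⟩),
      sgn_of_nonneg (cos_nonneg_of_mem_Icc ⟨by linarith, by linarith⟩)]

lemma sgn_sin_add_eq {δ t r : ℝ} (ht : t ∈ Icc 0 (2 * π)) (hr : r ∈ Icc (-δ) δ)
    (hδt : t ∉ sinZeroNbhd δ) : sgn (sin (t + r)) = sgn (sin t) := by
  obtain ⟨ht0, ht2⟩ := ht
  obtain ⟨hr1, hr2⟩ := hr
  simp only [sinZeroNbhd, mem_union, mem_Icc, not_or, not_and_or, not_le] at hδt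
  obtain ⟨⟨h1 | h1, h2 | h2⟩, h3 | h3⟩ := hδt <;> try linarith
  · rw [sgn_of_nonneg (sin_pos_of_pos_of_lt_pi (by linarith) (by linarith)).le,
      sgn_of_nonneg (sin_pos_of_pos_of_lt_pi (by linarith) (by linarith)).le]
  · rw [← sin_sub_two_pi (t + r), ← sin_sub_two_pi t,
      sgn_of_neg (sin_neg_of_neg_of_neg_pi_lt (by linarith) (by linarith)),
      sgn_of_neg (sin_neg_of_neg_of_neg_pi_lt (by linarith) (by linarith))]

lemma norm_oneBitQuant_sub_le (s t : ℝ) :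
    ‖oneBitQuant s - oneBitQuant t‖ ≤
      |sgn (cos s) - sgn (cos t)| + |sgn (sin s) - sgn (sin t)| := by
  simpa [oneBitQuant] using Complex.norm_le_abs_re_add_abs_im (oneBitQuant s - oneBitQuant t)

noncomputable def oneBitQuantJumpBound (δ t : ℝ) : ℝ :=
  (cosZeroNbhd δ).indicator (fun _ ↦ 2) t + (sinZeroNbhd δ).indicator (fun _ ↦ 2) t

lemma oneBitQuantJumpBound_nonneg (δ t : ℝ) : 0 ≤ oneBitQuantJumpBound δ t :=
  add_nonneg (indicator_nonneg (fun _ _ ↦ zero_le_two) t)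
    (indicator_nonneg (fun _ _ ↦ zero_le_two) t)

lemma sSup_norm_oneBitQuant_sub_le {δ t : ℝ} (ht : t ∈ Icc 0 (2 * π)) :
    sSup ((fun r ↦ ‖oneBitQuant (t + r) - oneBitQuant t‖) '' Icc (-δ) δ) ≤
      oneBitQuantJumpBound δ t := by
  refine Real.sSup_le ?_ (oneBitQuantJumpBound_nonneg δ t)
  rintro _ ⟨r, hr, rfl⟩
  exact (norm_oneBitQuant_sub_le _ _).trans <| add_le_add
    (abs_sgn_sub_sgn_le_indicator (sgn_cos_add_eq ht hr))
    (abs_sgn_sub_sgn_le_indicator (sgn_sin_add_eq ht hr))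

lemma integrable_indicator_const_of_isCompact {K : Set ℝ} (hK : IsCompact K) (c : ℝ) :
    Integrable (K.indicator fun _ ↦ c) :=
  (integrableOn_const hK.measure_lt_top.ne).integrable_indicator hK.measurableSet

lemma integrable_oneBitQuantJumpBound (δ : ℝ) : Integrable (oneBitQuantJumpBound δ) :=
  (integrable_indicator_const_of_isCompact (isCompact_cosZeroNbhd δ) 2).add
    (integrable_indicator_const_of_isCompact (isCompact_sinZeroNbhd δ) 2)

lemma volume_real_cosZeroNbhd_le {δ : ℝ} (hδ : 0 ≤ δ) : volume.real (cosZeroNbhd δ) ≤ 4 * δ := by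
  unfold cosZeroNbhd
  grw [measureReal_union_le]
  rw [volume_real_Icc_of_le (by linarith), volume_real_Icc_of_le (by linarith)]
  linarith

lemma volume_real_sinZeroNbhd_le {δ : ℝ} (hδ : 0 ≤ δ) : volume.real (sinZeroNbhd δ) ≤ 4 * δ := by
  unfold sinZeroNbhd
  grw [measureReal_union_le, measureReal_union_le]
  rw [volume_real_Icc_of_le hδ, volume_real_Icc_of_le (by linarith),
    volume_real_Icc_of_le (by linarith)]
  linarith

lemma integral_oneBitQuantJumpBound_le {δ : ℝ} (hδ : 0 ≤ δ) :
    ∫ t, oneBitQuantJumpBound δ t ≤ 16 * δ := by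
  unfold oneBitQuantJumpBound
  rw [integral_add
      (integrable_indicator_const_of_isCompact (isCompact_cosZeroNbhd δ) 2)
      (integrable_indicator_const_of_isCompact (isCompact_sinZeroNbhd δ) 2),
    integral_indicator_const _ (isCompact_cosZeroNbhd δ).measurableSet,
    integral_indicator_const _ (isCompact_sinZeroNbhd δ).measurableSet, smul_eq_mul, smul_eq_mul]
  linarith [volume_real_cosZeroNbhd_le hδ, volume_real_sinZeroNbhd_le hδ]

theorem oneBitQuant_meanLipschitz :
    MeanLipschitzWith (8 / Real.pi) oneBitQuant := by
  intro δ hδ _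
  have hint : ∫ t in (0 : ℝ)..2 * π,
      sSup ((fun r ↦ ‖oneBitQuant (t + r) - oneBitQuant t‖) '' Icc (-δ) δ) ≤ 16 * δ := by
    rw [intervalIntegral.integral_of_le two_pi_pos.le]
    calc _ ≤ ∫ t in Ioc 0 (2 * π), oneBitQuantJumpBound δ t :=
          setIntegral_mono_of_nonneg
            (fun t _ ↦ Real.sSup_nonneg (by rintro _ ⟨r, -, rfl⟩; exact norm_nonneg _))
            (fun t ht ↦ sSup_norm_oneBitQuant_sub_le (Ioc_subset_Icc_self ht))
            (integrable_oneBitQuantJumpBound δ).integrableOn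
      _ ≤ ∫ t, oneBitQuantJumpBound δ t :=
          setIntegral_le_integral (integrable_oneBitQuantJumpBound δ)
            (.of_forall (oneBitQuantJumpBound_nonneg δ))
      _ ≤ 16 * δ := integral_oneBitQuantJumpBound_le hδ.le
  calc 1 / (2 * π) * _ ≤ 1 / (2 * π) * (16 * δ) := by gcongr
    _ = 8 / π * δ := by field_simp; ring
end

section
/- The complex modulo function f_mod(t) = mod_{2π}(t) + i·mod_{2π}(t − π/2) is mean Lipschitz smooth with constant (4 + √2)/π: for every δ ∈ (0, π], (1/2π)∫₀^{2π} sup_{|r|≤δ} |f_mod(t+r) − f_mod(t)| dt ≤ ((4+√2)/π)·δ. -/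
/-- The normalized 2π-periodic sawtooth wave. -/
noncomputable def sawtooth (t : ℝ) : ℝ :=
  2 * (t / (2 * Real.pi) - ⌊t / (2 * Real.pi)⌋) - 1

/-- The complex modulo function f_mod(t) = mod_{2π}(t) + i·mod_{2π}(t − π/2). -/
noncomputable def fmod (t : ℝ) : ℂ :=
  (sawtooth t : ℂ) + Complex.I * (sawtooth (t - Real.pi / 2) : ℂ)

open Real Set MeasureTheory

theorem sawtooth_eq_fract (t : ℝ) : sawtooth t = 2 * Int.fract (t / (2 * π)) - 1 := rfl

theorem neg_one_le_sawtooth (t : ℝ) : -1 ≤ sawtooth t := by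
  linarith [sawtooth_eq_fract t, Int.fract_nonneg (t / (2 * π))]

theorem sawtooth_lt_one (t : ℝ) : sawtooth t < 1 := by
  linarith [sawtooth_eq_fract t, Int.fract_lt_one (t / (2 * π))]

theorem abs_sawtooth_sub_sawtooth_le (s t : ℝ) : |sawtooth s - sawtooth t| ≤ 2 :=
  abs_sub_le_iff.2 ⟨by linarith [sawtooth_lt_one s, neg_one_le_sawtooth t],
    by linarith [sawtooth_lt_one t, neg_one_le_sawtooth s]⟩

def jumpNbhd (δ : ℝ) : Set ℝ := ⋃ k : ℤ, Icc (2 * π * k - δ) (2 * π * k + δ)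

theorem measurableSet_jumpNbhd (δ : ℝ) : MeasurableSet (jumpNbhd δ) :=
  MeasurableSet.iUnion fun _ => measurableSet_Icc

theorem add_two_pi_mem_jumpNbhd_iff {δ t : ℝ} : t + 2 * π ∈ jumpNbhd δ ↔ t ∈ jumpNbhd δ := by
  simp only [jumpNbhd, mem_iUnion, mem_Icc]
  constructor
  · rintro ⟨k, hk⟩
    exact ⟨k - 1, by push_cast; constructor <;> linarith [hk.1, hk.2]⟩
  · rintro ⟨k, hk⟩
    exact ⟨k + 1, by push_cast; constructor <;> linarith [hk.1, hk.2]⟩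

theorem jumpNbhd_inter_Icc {δ : ℝ} (hδ : δ ≤ π) : jumpNbhd δ ∩ Icc (-π) π = Icc (-δ) δ := by
  ext t
  simp only [jumpNbhd, mem_inter_iff, mem_iUnion, mem_Icc]
  constructor
  · rintro ⟨⟨k, hk₁, hk₂⟩, ht₁, ht₂⟩
    have hπ := pi_pos
    rcases lt_trichotomy k 0 with hk | rfl | hk
    · have : (k : ℝ) ≤ -1 := by exact_mod_cast Int.le_sub_one_of_lt hk
      constructor <;> nlinarith
    · simp only [Int.cast_zero, mul_zero, zero_sub, zero_add] at hk₁ hk₂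
      exact ⟨hk₁, hk₂⟩
    · have : (1 : ℝ) ≤ k := by exact_mod_cast hk
      constructor <;> nlinarith
  · rintro ⟨ht₁, ht₂⟩
    exact ⟨⟨0, by simpa using ht₁, by simpa using ht₂⟩, by linarith, by linarith⟩

theorem sawtooth_add_of_notMem_jumpNbhd {δ t r : ℝ} (ht : t ∉ jumpNbhd δ) (hr : |r| ≤ δ) :
    sawtooth (t + r) = sawtooth t + r / π := by
  have hπ := pi_pos
  set k := ⌊t / (2 * π)⌋
  set f := Int.fract (t / (2 * π))
  have ht_eq : t = 2 * π * k + 2 * π * f := by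
    rw [← mul_add, Int.floor_add_fract]; field_simp
  have hf₀ := Int.fract_nonneg (t / (2 * π))
  have hf₁ := Int.fract_lt_one (t / (2 * π))
  obtain ⟨hr₁, hr₂⟩ := abs_le.1 hr
  have h_left : δ < 2 * π * f := by
    by_contra! h
    exact ht (mem_iUnion.2 ⟨k, by constructor <;> nlinarith⟩)
  have h_right : 2 * π * f < 2 * π - δ := by
    by_contra! h
    exact ht (mem_iUnion.2 ⟨k + 1, by push_cast; constructor <;> nlinarith⟩)
  have h_fract : Int.fract ((t + r) / (2 * π)) = f + r / (2 * π) := by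
    have h_eq : f + r / (2 * π) = (2 * π * f + r) / (2 * π) := by field_simp
    rw [Int.fract_eq_iff, h_eq, div_lt_one (by positivity)]
    refine ⟨div_nonneg (by linarith) (by positivity), by linarith, k, ?_⟩
    rw [ht_eq]; field_simp; ring
  rw [sawtooth_eq_fract, sawtooth_eq_fract, h_fract]
  field_simp
  ring

theorem abs_sawtooth_add_sub_le {δ t r : ℝ} (hr : |r| ≤ δ) :
    |sawtooth (t + r) - sawtooth t| ≤ δ / π + (jumpNbhd δ).indicator (fun _ => 2) t := by
  have hδ : 0 ≤ δ / π := div_nonneg ((abs_nonneg r).trans hr) pi_pos.le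
  by_cases ht : t ∈ jumpNbhd δ
  · rw [indicator_of_mem ht]
    linarith [abs_sawtooth_sub_sawtooth_le (t + r) t]
  · rw [indicator_of_notMem ht, add_zero, sawtooth_add_of_notMem_jumpNbhd ht hr,
      add_sub_cancel_left, abs_div, abs_of_pos pi_pos]
    gcongr

theorem Complex.norm_le_of_abs_re_le_of_abs_im_le {z : ℂ} {a b c : ℝ} (ha : 0 ≤ a) (hb : 0 ≤ b)
    (hc : 0 ≤ c) (hre : |z.re| ≤ a + b) (him : |z.im| ≤ a + c) : ‖z‖ ≤ √2 * a + b + c := by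
  have h_sqrt : √2 ^ 2 = 2 := sq_sqrt zero_le_two
  have h_one : 1 ≤ √2 := one_le_sqrt.2 one_le_two
  rw [norm_eq_sqrt_sq_add_sq, sqrt_le_left (by positivity), ← sq_abs z.re, ← sq_abs z.im]
  have := pow_le_pow_left₀ (abs_nonneg _) hre 2
  have := pow_le_pow_left₀ (abs_nonneg _) him 2
  nlinarith [mul_nonneg (sub_nonneg.2 h_one) (mul_nonneg ha hb),
    mul_nonneg (sub_nonneg.2 h_one) (mul_nonneg ha hc), mul_nonneg hb hc, sq_nonneg a]

@[simp] theorem fmod_re (t : ℝ) : (fmod t).re = sawtooth t := by simp [fmod]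

@[simp] theorem fmod_im (t : ℝ) : (fmod t).im = sawtooth (t - π / 2) := by simp [fmod]

noncomputable def fmodOscBound (δ t : ℝ) : ℝ :=
  √2 * (δ / π) + (jumpNbhd δ).indicator (fun _ => 2) t
    + (jumpNbhd δ).indicator (fun _ => 2) (t - π / 2)

theorem norm_fmod_add_sub_le {δ t r : ℝ} (hr : |r| ≤ δ) :
    ‖fmod (t + r) - fmod t‖ ≤ fmodOscBound δ t := by
  have hδ : 0 ≤ δ / π := div_nonneg ((abs_nonneg r).trans hr) pi_pos.le
  have h_im := abs_sawtooth_add_sub_le (t := t - π / 2) hr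
  rw [sub_add_eq_add_sub] at h_im
  refine Complex.norm_le_of_abs_re_le_of_abs_im_le hδ (indicator_nonneg (by simp) _)
    (indicator_nonneg (by simp) _) ?_ ?_
  · simpa using abs_sawtooth_add_sub_le hr
  · simpa using h_im

theorem sSup_norm_fmod_add_sub_le {δ : ℝ} (hδ : 0 ≤ δ) (t : ℝ) :
    sSup ((fun r => ‖fmod (t + r) - fmod t‖) '' Icc (-δ) δ) ≤ fmodOscBound δ t := by
  refine Real.sSup_le ?_ ((norm_nonneg _).trans (norm_fmod_add_sub_le (r := 0) (by simpa)))
  rintro _ ⟨r, hr, rfl⟩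
  exact norm_fmod_add_sub_le (abs_le.2 hr)

theorem indicator_jumpNbhd_periodic (δ c : ℝ) :
    Function.Periodic ((jumpNbhd δ).indicator fun _ => c) (2 * π) := by
  intro t
  by_cases ht : t ∈ jumpNbhd δ
  · rw [indicator_of_mem ht, indicator_of_mem (add_two_pi_mem_jumpNbhd_iff.2 ht)]
  · rw [indicator_of_notMem ht, indicator_of_notMem (mt add_two_pi_mem_jumpNbhd_iff.1 ht)]

theorem intervalIntegrable_indicator_jumpNbhd (δ c a b : ℝ) :
    IntervalIntegrable ((jumpNbhd δ).indicator fun _ => c) volume a b :=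
  ⟨intervalIntegrable_const.1.indicator (measurableSet_jumpNbhd δ),
    intervalIntegrable_const.2.indicator (measurableSet_jumpNbhd δ)⟩

theorem integral_indicator_jumpNbhd {δ : ℝ} (hδ₀ : 0 ≤ δ) (hδ : δ ≤ π) (c a : ℝ) :
    ∫ t in a..a + 2 * π, (jumpNbhd δ).indicator (fun _ => c) t = 2 * δ * c := by
  rw [(indicator_jumpNbhd_periodic δ c).intervalIntegral_add_eq a (-π),
    intervalIntegral.integral_of_le (by linarith [pi_pos]), ← integral_Icc_eq_integral_Ioc,
    setIntegral_indicator (measurableSet_jumpNbhd δ), show -π + 2 * π = π by ring,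
    inter_comm, jumpNbhd_inter_Icc hδ, setIntegral_const,
    Real.volume_real_Icc_of_le (by linarith), smul_eq_mul]
  ring

theorem intervalIntegrable_indicator_jumpNbhd_comp_sub (δ c d a b : ℝ) :
    IntervalIntegrable (fun t => (jumpNbhd δ).indicator (fun _ => c) (t - d)) volume a b := by
  simpa using (intervalIntegrable_indicator_jumpNbhd δ c (a - d) (b - d)).comp_sub_right d

theorem intervalIntegrable_fmodOscBound (δ a b : ℝ) :
    IntervalIntegrable (fmodOscBound δ) volume a b :=
  (intervalIntegrable_const.add (intervalIntegrable_indicator_jumpNbhd δ 2 a b)).add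
    (intervalIntegrable_indicator_jumpNbhd_comp_sub δ 2 (π / 2) a b)

theorem integral_fmodOscBound {δ : ℝ} (hδ₀ : 0 ≤ δ) (hδ : δ ≤ π) :
    ∫ t in 0..2 * π, fmodOscBound δ t = (2 * √2 + 8) * δ := by
  have h_period (a : ℝ) :
      ∫ t in a..a + 2 * π, (jumpNbhd δ).indicator (fun _ => (2 : ℝ)) t = 4 * δ := by
    rw [integral_indicator_jumpNbhd hδ₀ hδ]
    ring
  have h_zero := h_period 0
  rw [zero_add] at h_zero
  have h_shift :
      ∫ t in 0..2 * π, (jumpNbhd δ).indicator (fun _ => (2 : ℝ)) (t - π / 2) = 4 * δ := by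
    rw [intervalIntegral.integral_comp_sub_right (fun t => (jumpNbhd δ).indicator _ t),
      show 2 * π - π / 2 = 0 - π / 2 + 2 * π by ring, h_period]
  unfold fmodOscBound
  rw [intervalIntegral.integral_add
      (intervalIntegrable_const.add (intervalIntegrable_indicator_jumpNbhd δ 2 0 (2 * π)))
      (intervalIntegrable_indicator_jumpNbhd_comp_sub δ 2 (π / 2) 0 (2 * π)),
    intervalIntegral.integral_add intervalIntegrable_const
      (intervalIntegrable_indicator_jumpNbhd δ 2 0 (2 * π)), intervalIntegral.integral_const,
    h_shift, h_zero, smul_eq_mul]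
  field_simp
  ring

theorem fmod_meanLipschitz :
    MeanLipschitzWith ((4 + Real.sqrt 2) / Real.pi) fmod := by
  intro δ hδ hδπ
  by_cases hg : IntervalIntegrable
      (fun t => sSup ((fun r => ‖fmod (t + r) - fmod t‖) '' Icc (-δ) δ)) volume 0 (2 * π)
  · calc (1 / (2 * π)) *
            ∫ t in 0..2 * π, sSup ((fun r => ‖fmod (t + r) - fmod t‖) '' Icc (-δ) δ)
        ≤ (1 / (2 * π)) * ∫ t in 0..2 * π, fmodOscBound δ t := by
          gcongr
          exact intervalIntegral.integral_mono_on (by positivity) hg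
            (intervalIntegrable_fmodOscBound δ 0 (2 * π))
            fun t _ => sSup_norm_fmod_add_sub_le hδ.le t
      _ = (4 + √2) / π * δ := by
          rw [integral_fmodOscBound hδ.le hδπ]
          field_simp
          ring
  · -- a non-integrable integrand has integral `0` by convention
    rw [intervalIntegral.integral_undef hg, mul_zero]
    positivity
end

section
/- Suppose a seminorm ‖·‖_R on signed measures, sketch operators A_Φ, A_Ψ : M → ℂ^m, and a model set G satisfy: (LRIP) ‖P − Q‖_R ≤ γ‖A_Φ(P) − A_Φ(Q)‖₂ for all P, Q ∈ G; and the asymmetric minimizer θ' satisfies ‖A_Φ(P_{θ'}) − z_Φ‖₂ ≤ ‖A_Φ(P_{θ̂}) − z_Φ‖₂ + 2√ε where θ̂ minimizes ‖z_Φ − A_Φ(P_θ)‖₂ over θ ∈ Θ. Then for every Q ∈ G, ‖P_{θ'} − P₀‖_R ≤ ‖Q − P₀‖_R + 2γ√ε + 2γ‖z_Φ − A_Φ(P₀)‖₂ + 2γ‖A_Φ(P₀) − A_Φ(Q)‖₂, where z_Φ = A_Φ(P̂_X). -/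
/-!
Pass from `P θ'` to `P₀` through `Q` in the seminorm `N`, and convert `N (P θ' - Q)` into a sketch
distance by the LRIP. In sketch space, `θ̂` is at least as close to `z = A Pemp` as `Q` is, and `θ'`
is within `2 √ε` of `θ̂`'s distance, so `‖A (P θ') - A Q‖ ≤ 2 ‖z - A Q‖ + 2 √ε`; one more triangle
inequality through `A P₀` finishes.
-/

lemma norm_sub_le_of_near_minimizer {E : Type*} [SeminormedAddGroup E] {z a a' b : E} {δ : ℝ}
    (hmin : ‖z - a‖ ≤ ‖z - b‖) (hnear : ‖a' - z‖ ≤ ‖a - z‖ + δ) :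
    ‖a' - b‖ ≤ 2 * ‖z - b‖ + δ := by
  calc ‖a' - b‖ ≤ ‖a' - z‖ + ‖z - b‖ := norm_sub_le_norm_sub_add_norm_sub _ _ _
    _ ≤ ‖z - a‖ + δ + ‖z - b‖ := by rw [norm_sub_rev z a]; gcongr
    _ ≤ 2 * ‖z - b‖ + δ := by linarith

lemma Seminorm.map_sub_le_map_sub_add_map_sub {𝕜 V : Type*} [SeminormedRing 𝕜] [AddGroup V]
    [SMul 𝕜 V] (N : Seminorm 𝕜 V) (x y z : V) : N (x - z) ≤ N (x - y) + N (y - z) := by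
  simpa using map_add_le_add N (x - y) (y - z)

lemma Seminorm.map_sub_le_of_lrip {𝕜 V W : Type*} [SeminormedRing 𝕜] [AddGroup V] [SMul 𝕜 V]
    [SeminormedAddGroup W] (N : Seminorm 𝕜 V) (A : V → W) {G : Set V} {γ : ℝ}
    (hLRIP : ∀ p ∈ G, ∀ q ∈ G, N (p - q) ≤ γ * ‖A p - A q‖) {p q : V} (hp : p ∈ G) (hq : q ∈ G)
    (r : V) : N (p - r) ≤ N (q - r) + γ * ‖A p - A q‖ := by
  linarith [N.map_sub_le_map_sub_add_map_sub p q r, hLRIP p hp q hq]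

theorem lrip_lpd_combination_general {V : Type*} [AddCommGroup V] [Module ℝ V]
    {m : ℕ} {Θ : Type*}
    (N : Seminorm ℝ V) (A : V → EuclideanSpace ℂ (Fin m)) (G : Set V)
    (P : Θ → V) (hPG : ∀ θ, P θ ∈ G) (hGP : ∀ Q ∈ G, ∃ θ, P θ = Q)
    (P₀ Pemp : V) (γ ε : ℝ) (hγ : 0 ≤ γ)
    (hLRIP : ∀ p ∈ G, ∀ q ∈ G, N (p - q) ≤ γ * ‖A p - A q‖)
    (θ' θhat : Θ)
    (hmin : ∀ θ, ‖A Pemp - A (P θhat)‖ ≤ ‖A Pemp - A (P θ)‖)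
    (hsub : ‖A (P θ') - A Pemp‖ ≤ ‖A (P θhat) - A Pemp‖ + 2 * Real.sqrt ε) :
    ∀ Q ∈ G, N (P θ' - P₀) ≤
      N (Q - P₀) + 2 * γ * Real.sqrt ε + 2 * γ * ‖A Pemp - A P₀‖
        + 2 * γ * ‖A P₀ - A Q‖ := by
  rintro Q hQ
  obtain ⟨θQ, rfl⟩ := hGP Q hQ
  have hsketch : ‖A (P θ') - A (P θQ)‖ ≤ 2 * ‖A Pemp - A (P θQ)‖ + 2 * Real.sqrt ε :=
    norm_sub_le_of_near_minimizer (hmin θQ) hsub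
  have hdata : ‖A Pemp - A (P θQ)‖ ≤ ‖A Pemp - A P₀‖ + ‖A P₀ - A (P θQ)‖ :=
    norm_sub_le_norm_sub_add_norm_sub _ _ _
  calc N (P θ' - P₀) ≤ N (P θQ - P₀) + γ * ‖A (P θ') - A (P θQ)‖ :=
        N.map_sub_le_of_lrip A hLRIP (hPG θ') hQ P₀
    _ ≤ N (P θQ - P₀) + γ * (2 * ‖A Pemp - A P₀‖ + 2 * ‖A P₀ - A (P θQ)‖ + 2 * Real.sqrt ε) := by
        gcongr; linarith
    _ = _ := by ring

theorem lrip_lpd_combination {V : Type*} [AddCommGroup V] [Module ℝ V]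
    {m : ℕ} {Θ : Type*}
    (N : Seminorm ℝ V) (A : V → EuclideanSpace ℂ (Fin m)) (G : Set V)
    (P : Θ → V) (hPG : ∀ θ, P θ ∈ G) (hGP : ∀ Q ∈ G, ∃ θ, P θ = Q)
    (P₀ Pemp : V) (γ ε : ℝ) (hγ : 0 ≤ γ) (hε : 0 ≤ ε)
    (hLRIP : ∀ p ∈ G, ∀ q ∈ G, N (p - q) ≤ γ * ‖A p - A q‖)
    (θ' θhat : Θ)
    (hmin : ∀ θ, ‖A Pemp - A (P θhat)‖ ≤ ‖A Pemp - A (P θ)‖)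
    (hsub : ‖A (P θ') - A Pemp‖ ≤ ‖A (P θhat) - A Pemp‖ + 2 * Real.sqrt ε) :
    ∀ Q ∈ G, N (P θ' - P₀) ≤
      N (Q - P₀) + 2 * γ * Real.sqrt ε + 2 * γ * ‖A Pemp - A P₀‖
        + 2 * γ * ‖A P₀ - A Q‖ :=
  lrip_lpd_combination_general N A G P hPG hGP P₀ Pemp γ ε hγ hLRIP θ' θhat hmin hsub
end
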